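/- arXiv:0801.2478 — 2 statements merged into one kernel-verified Lean document; each statement's English description precedes it below -/
import Mathlib

section
/- Let Ψ : ℝ → ℝ be continuous, monotone increasing, with Ψ(0) = 0, and suppose there is δ > 0 such that (Ψ(x) - Ψ(y))(x - y) ≥ δ(x - y)² for all x, y ∈ ℝ. Then for all λ ∈ (0, 1/(2δ)) the Yosida approximation satisfies (Ψ_λ(x) - Ψ_λ(y))(x - y) ≥ (δ/2)(x - y)² for all x, y ∈ ℝ. -/
/-- Strong monotonicity is inherited (with constant δ/2) by the Yosida approximation
for λ small. -/
theorem yosida_strong_monotonicity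
    (Ψ : ℝ → ℝ) (hΨc : Continuous Ψ) (hΨ : Monotone Ψ) (hΨ0 : Ψ 0 = 0)
    (δ : ℝ) (hδ : 0 < δ)
    (hstrong : ∀ x y : ℝ, (Ψ x - Ψ y) * (x - y) ≥ δ * (x - y) ^ 2)
    (lam : ℝ) (hlam : 0 < lam) (hlam' : lam < 1 / (2 * δ))
    (J : ℝ → ℝ) (hJ : ∀ x, J x + lam * Ψ (J x) = x)
    (Ψl : ℝ → ℝ) (hΨl : ∀ x, Ψl x = (x - J x) / lam) :
    ∀ x y : ℝ, (Ψl x - Ψl y) * (x - y) ≥ (δ / 2) * (x - y) ^ 2 := by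
  intro x y
  have hx := hJ x
  have hy := hJ y
  have hlamne : lam ≠ 0 := ne_of_gt hlam
  have hΨlx : Ψl x = Ψ (J x) := by
    rw [hΨl]; field_simp; linarith
  have hΨly : Ψl y = Ψ (J y) := by
    rw [hΨl]; field_simp; linarith
  have hA := hstrong (J x) (J y)
  have hdl : lam * (2 * δ) < 1 := (lt_div_iff₀ (by positivity)).mp hlam'
  have hxy : x - y = (J x - J y) + lam * (Ψ (J x) - Ψ (J y)) := by ring_nf; linarith
  rw [hΨlx, hΨly, hxy]
  have hAB : 0 ≤ (Ψ (J x) - Ψ (J y)) * (J x - J y) :=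
    le_trans (by positivity) hA
  have h1 : 0 ≤ (1 - lam * (2 * δ)) * ((Ψ (J x) - Ψ (J y)) * (J x - J y)) :=
    mul_nonneg (by linarith) hAB
  have h2 : 0 ≤ lam * (Ψ (J x) - Ψ (J y)) ^ 2 * (2 - lam * δ) :=
    mul_nonneg (mul_nonneg hlam.le (sq_nonneg _)) (by nlinarith)
  nlinarith [hA, h1, h2]
end

section
/- Let f : [0, ∞) → [0, ∞) be continuous, τ ≥ 0, γρ > 0, C ≥ 0, a ≥ 0, and suppose f(t) + γρ·min(t, τ) ≤ a + C∫₀^t f(s) ds for all t ≥ 0. Then f(t) + γρ∫₀^t e^{C(t-s)} 1_{[0,τ]}(s) ds ≤ a·e^{Ct} for all t ≥ 0. -/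
/-!
With forcing `G = γ min(·, τ)`, the function
`t ↦ e^{-Ct} (a + C ∫₀ᵗ f) + C ∫₀ᵗ e^{-Cs} G(s) ds` has derivative
`C e^{-Ct} (f + G - a - C ∫₀ᵗ f) ≤ 0`, so it stays below its value `a` at `0`; this is the
Gronwall bound `f + G + C ∫₀ᵗ e^{C(t-s)} G(s) ds ≤ a e^{Ct}`. Since `min(·, τ)` has derivative
`1_{[0,τ]}` off the single point `τ`, an integration by parts identifies
`min(t, τ) + C ∫₀ᵗ e^{C(t-s)} min(s, τ) ds` with `∫₀ᵗ e^{C(t-s)} 1_{[0,τ]}(s) ds`.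
-/

open Set MeasureTheory Real intervalIntegral

lemma hasDerivAt_integral_of_continuousOn_Icc {f : ℝ → ℝ} {a b x : ℝ}
    (hf : ContinuousOn f (Icc a b)) (hx : x ∈ Ioo a b) :
    HasDerivAt (fun u => ∫ s in a..u, f s) (f x) x :=
  integral_hasDerivAt_right
    (hf.mono (uIcc_subset_Icc (left_mem_Icc.2 (hx.1.le.trans hx.2.le))
      (Ioo_subset_Icc_self hx))).intervalIntegrable
    ((hf.mono Ioo_subset_Icc_self).stronglyMeasurableAtFilter isOpen_Ioo x hx)
    (hf.continuousAt (Icc_mem_nhds hx.1 hx.2))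

lemma continuousOn_integral_of_continuousOn_Icc {f : ℝ → ℝ} {a b : ℝ} (hab : a ≤ b)
    (hf : ContinuousOn f (Icc a b)) :
    ContinuousOn (fun u => ∫ s in a..u, f s) (Icc a b) := by
  rw [← uIcc_of_le hab] at hf ⊢
  exact continuousOn_primitive_interval (hf.integrableOn_compact isCompact_uIcc)

theorem add_integral_exp_mul_le_of_le_add_integral {f G : ℝ → ℝ} {a C T : ℝ}
    (hC : 0 ≤ C) (hT : 0 ≤ T)
    (hf : ContinuousOn f (Icc 0 T)) (hG : ContinuousOn G (Icc 0 T))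
    (h : ∀ t ∈ Icc 0 T, f t + G t ≤ a + C * ∫ s in 0..t, f s) :
    f T + G T + C * ∫ s in 0..T, exp (C * (T - s)) * G s ≤ a * exp (C * T) := by
  set F : ℝ → ℝ := fun t => ∫ s in 0..t, f s
  set Ψ : ℝ → ℝ := fun t =>
    exp (-(C * t)) * (a + C * F t) + C * ∫ s in 0..t, exp (-(C * s)) * G s
  have hEG : ContinuousOn (fun s => exp (-(C * s)) * G s) (Icc 0 T) := by fun_prop
  have hΨ : AntitoneOn Ψ (Icc 0 T) := by
    refine antitoneOn_of_hasDerivWithinAt_nonpos (convex_Icc 0 T)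
      (f' := fun x => C * exp (-(C * x)) * (f x + G x - (a + C * F x))) ?_ ?_ ?_
    · have hF := continuousOn_integral_of_continuousOn_Icc hT hf
      have hIEG := continuousOn_integral_of_continuousOn_Icc hT hEG
      fun_prop
    · intro x hx
      rw [interior_Icc] at hx ⊢
      have hexp : HasDerivAt (fun t => exp (-(C * t))) (-C * exp (-(C * x))) x := by
        simpa [mul_comm] using ((hasDerivAt_id x).const_mul C).neg.exp
      have hΨx : HasDerivAt Ψ _ x := (hexp.mul
        (((hasDerivAt_integral_of_continuousOn_Icc hf hx).const_mul C).const_add a)).add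
        ((hasDerivAt_integral_of_continuousOn_Icc hEG hx).const_mul C)
      exact hΨx.hasDerivWithinAt.congr_deriv (by ring)
    · intro x hx
      rw [interior_Icc] at hx
      have hx' : f x + G x - (a + C * F x) ≤ 0 := by linarith [h x (Ioo_subset_Icc_self hx)]
      exact mul_nonpos_of_nonneg_of_nonpos (by positivity) hx'
  have hΨT : Ψ T ≤ a := by
    simpa [Ψ, F] using hΨ ⟨le_rfl, hT⟩ ⟨hT, le_rfl⟩ hT
  have hconv : exp (C * T) * ∫ s in 0..T, exp (-(C * s)) * G s
      = ∫ s in 0..T, exp (C * (T - s)) * G s := by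
    rw [← intervalIntegral.integral_const_mul]
    congr 1 with s
    rw [← mul_assoc, ← exp_add]
    ring_nf
  calc f T + G T + C * ∫ s in 0..T, exp (C * (T - s)) * G s
      ≤ a + C * F T + C * ∫ s in 0..T, exp (C * (T - s)) * G s := by
        linarith [h T ⟨hT, le_rfl⟩]
    _ = exp (C * T) * Ψ T := by
        have hprod : exp (C * T) * exp (-(C * T)) = 1 := by
          rw [← exp_add, add_neg_cancel, exp_zero]
        rw [← hconv]
        linear_combination (-(a + C * F T)) * hprod
    _ ≤ a * exp (C * T) := by
        rw [mul_comm a]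
        exact mul_le_mul_of_nonneg_left hΨT (exp_pos _).le

theorem integral_exp_mul_eq_of_hasDerivAt_off_countable {G g : ℝ → ℝ} {C a b : ℝ} {S : Set ℝ}
    (hab : a ≤ b) (hS : S.Countable) (hGc : ContinuousOn G (Icc a b))
    (hGd : ∀ x ∈ Ioo a b \ S, HasDerivAt G (g x) x) (hg : IntervalIntegrable g volume a b) :
    ∫ x in a..b, exp (C * (b - x)) * g x
      = G b - exp (C * (b - a)) * G a + C * ∫ x in a..b, exp (C * (b - x)) * G x := by
  have hE : ∀ x, HasDerivAt (fun x => exp (C * (b - x))) (-C * exp (C * (b - x))) x := fun x => by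
    simpa [mul_comm] using (((hasDerivAt_id x).const_sub b).const_mul C).exp
  have hEG : IntervalIntegrable (fun x => exp (C * (b - x)) * G x) volume a b := by
    refine ContinuousOn.intervalIntegrable ?_
    rw [uIcc_of_le hab]
    fun_prop
  have hEg : IntervalIntegrable (fun x => exp (C * (b - x)) * g x) volume a b :=
    hg.continuousOn_mul (by fun_prop)
  have hFTC := integral_eq_of_hasDerivAt_off_countable_of_le
    (fun x => exp (C * (b - x)) * G x)
    (fun x => exp (C * (b - x)) * g x - C * (exp (C * (b - x)) * G x))
    hab hS (by fun_prop) (fun x hx => ((hE x).mul (hGd x hx)).congr_deriv (by ring))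
    (hEg.sub (hEG.const_mul C))
  rw [integral_sub hEg (hEG.const_mul C), intervalIntegral.integral_const_mul] at hFTC
  simp only [sub_self, mul_zero, exp_zero, one_mul] at hFTC
  linarith

theorem integral_exp_mul_indicator_Icc {C τ t : ℝ} (hτ : 0 ≤ τ) (ht : 0 ≤ t) :
    ∫ s in 0..t, exp (C * (t - s)) * indicator (Icc 0 τ) (fun _ => (1 : ℝ)) s
      = min t τ + C * ∫ s in 0..t, exp (C * (t - s)) * min s τ := by
  have hderiv : ∀ x ∈ Ioo 0 t \ {τ},
      HasDerivAt (fun s => min s τ) (indicator (Icc 0 τ) (fun _ => (1 : ℝ)) x) x := by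
    rintro x ⟨hx, hxτ⟩
    rw [mem_singleton_iff] at hxτ
    rcases lt_or_gt_of_ne hxτ with hlt | hgt
    · rw [indicator_of_mem (show x ∈ Icc 0 τ from ⟨hx.1.le, hlt.le⟩)]
      exact (hasDerivAt_id x).congr_of_eventuallyEq
        ((gt_mem_nhds hlt).mono fun s hs => min_eq_left hs.le)
    · rw [indicator_of_notMem fun h => hgt.not_ge h.2]
      exact (hasDerivAt_const x τ).congr_of_eventuallyEq
        ((lt_mem_nhds hgt).mono fun s hs => min_eq_right hs.le)
  have hint : IntervalIntegrable (indicator (Icc 0 τ) (fun _ => (1 : ℝ))) volume 0 t :=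
    intervalIntegrable_iff.2 ((integrableOn_const (by simp)).indicator measurableSet_Icc)
  rw [integral_exp_mul_eq_of_hasDerivAt_off_countable ht (countable_singleton τ)
    (by fun_prop) hderiv hint, min_eq_left hτ, mul_zero, sub_zero]

theorem gronwall_comparison_extinction_general
    (f : ℝ → ℝ) (hf : ContinuousOn f (Set.Ici 0))
    (τ : ℝ) (hτ : 0 ≤ τ)
    (gr : ℝ)
    (C : ℝ) (hC : 0 ≤ C)
    (a : ℝ)
    (hyp : ∀ t, 0 ≤ t → f t + gr * min t τ ≤ a + C * ∫ s in (0:ℝ)..t, f s) :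
    ∀ t, 0 ≤ t →
      f t + gr * ∫ s in (0:ℝ)..t,
          Real.exp (C * (t - s)) * Set.indicator (Set.Icc (0:ℝ) τ) (fun _ => (1:ℝ)) s
        ≤ a * Real.exp (C * t) := by
  intro t ht
  have hgronwall := add_integral_exp_mul_le_of_le_add_integral (G := fun s => gr * min s τ) hC ht
    (hf.mono Icc_subset_Ici_self) (by fun_prop) fun s hs => hyp s hs.1
  have hpull : ∫ s in 0..t, exp (C * (t - s)) * (gr * min s τ)
      = gr * ∫ s in 0..t, exp (C * (t - s)) * min s τ := by
    rw [← intervalIntegral.integral_const_mul]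
    congr 1 with s
    ring
  rw [hpull] at hgronwall
  rw [integral_exp_mul_indicator_Icc hτ ht]
  linarith

/-- Deterministic Gronwall-type comparison lemma used in the extinction proof. -/
theorem gronwall_comparison_extinction
    (f : ℝ → ℝ) (hf : ContinuousOn f (Set.Ici 0))
    (hfnn : ∀ t, 0 ≤ t → 0 ≤ f t)
    (τ : ℝ) (hτ : 0 ≤ τ)
    (gr : ℝ) (hgr : 0 < gr)
    (C : ℝ) (hC : 0 ≤ C)
    (a : ℝ) (ha : 0 ≤ a)
    (hyp : ∀ t, 0 ≤ t → f t + gr * min t τ ≤ a + C * ∫ s in (0:ℝ)..t, f s) :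
    ∀ t, 0 ≤ t →
      f t + gr * ∫ s in (0:ℝ)..t,
          Real.exp (C * (t - s)) * Set.indicator (Set.Icc (0:ℝ) τ) (fun _ => (1:ℝ)) s
        ≤ a * Real.exp (C * t) :=
  gronwall_comparison_extinction_general f hf τ hτ gr C hC a hyp
end
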